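/- For λ ≥ 0 and y ∈ ℝ, the minimizer of the function w ↦ λ|w| + ι_{[0,1]}(w) + (1/2)(w − y)² is unique and equals Π_{[0,1]}(soft(y, λ)), i.e., the projection onto [0,1] of the soft-thresholding of y: the minimizer is min(max(sign(y)·max(|y|−λ, 0), 0), 1). -/
import Mathlib


/-- Soft-thresholding operator. -/
noncomputable def soft (y lam : ℝ) : ℝ := Real.sign y * max (|y| - lam) 0

/-- Projection onto the interval `[0,1]`. -/
noncomputable def proj01 (t : ℝ) : ℝ := min (max t 0) 1

lemma proj01_mem (t : ℝ) : proj01 t ∈ Set.Icc (0:ℝ) 1 := by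
  unfold proj01
  exact ⟨le_min (le_max_right t 0) zero_le_one, min_le_right _ _⟩

lemma proj_soft_eq (lam y : ℝ) (hlam : 0 ≤ lam) :
    proj01 (soft y lam) = proj01 (y - lam) := by
  unfold soft proj01
  rcases lt_trichotomy y 0 with h | h | h
  · rw [Real.sign_of_neg h, abs_of_neg h]
    have h1 : max (-y - lam) 0 ≥ 0 := le_max_right _ _
    have h2 : max (-1 * max (-y - lam) 0) 0 = 0 := by
      rw [max_eq_right]; nlinarith
    have h3 : max (y - lam) 0 = 0 := by
      rw [max_eq_right]; linarith
    rw [h2, h3]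
  · simp [h]
    rw [max_eq_right (by linarith : -lam ≤ 0), min_eq_left zero_le_one]
  · rw [Real.sign_of_pos h, abs_of_pos h, one_mul, max_assoc, max_self]

lemma proj01_closest (c w : ℝ) (hw : w ∈ Set.Icc (0:ℝ) 1) :
    (proj01 c - c) ^ 2 ≤ (w - c) ^ 2 ∧
    ((w - c) ^ 2 = (proj01 c - c) ^ 2 → w = proj01 c) := by
  obtain ⟨hw0, hw1⟩ := hw
  unfold proj01
  rcases le_or_gt c 0 with hc | hc
  · rw [max_eq_right hc, min_eq_left zero_le_one]
    exact ⟨by nlinarith, fun h => by nlinarith⟩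
  rcases le_or_gt 1 c with hc1 | hc1
  · rw [max_eq_left (by linarith), min_eq_right hc1]
    exact ⟨by nlinarith, fun h => by nlinarith⟩
  · rw [max_eq_left hc.le, min_eq_left hc1.le]
    refine ⟨by nlinarith, fun h => ?_⟩
    have h0 : (w - c) ^ 2 = 0 := by nlinarith
    have := pow_eq_zero_iff (n := 2) (by norm_num) |>.mp h0
    linarith

/-- The scalar `W`-update of Masked-RPCA: `Π_{[0,1]}(soft(y, λ))` is the unique minimizer
over `[0,1]` of `w ↦ λ|w| + (1/2)(w − y)²`. -/
theorem proj_soft_is_unique_minimizer (lam y : ℝ) (hlam : 0 ≤ lam) :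
    proj01 (soft y lam) ∈ Set.Icc (0 : ℝ) 1 ∧
    (∀ w ∈ Set.Icc (0 : ℝ) 1,
      lam * |proj01 (soft y lam)| + 1 / 2 * (proj01 (soft y lam) - y) ^ 2
        ≤ lam * |w| + 1 / 2 * (w - y) ^ 2) ∧
    (∀ w ∈ Set.Icc (0 : ℝ) 1,
      lam * |w| + 1 / 2 * (w - y) ^ 2
        = lam * |proj01 (soft y lam)| + 1 / 2 * (proj01 (soft y lam) - y) ^ 2 →
      w = proj01 (soft y lam)) := by
  have hp : proj01 (soft y lam) = proj01 (y - lam) := proj_soft_eq lam y hlam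
  have hpmem := proj01_mem (y - lam)
  have hpabs : |proj01 (y - lam)| = proj01 (y - lam) := abs_of_nonneg hpmem.1
  refine ⟨hp ▸ hpmem, ?_, ?_⟩
  · intro w hw
    obtain ⟨hle, -⟩ := proj01_closest (y - lam) w hw
    rw [hp, hpabs, abs_of_nonneg hw.1]
    nlinarith [hle]
  · intro w hw heq
    obtain ⟨hle, huniq⟩ := proj01_closest (y - lam) w hw
    rw [hp, hpabs, abs_of_nonneg hw.1] at heq
    rw [hp]
    exact huniq (by nlinarith [heq])
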